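/- Let q ≥ 3, β > 0 and h ≥ 0, and let x_0 be a global minimum point of G_{β,h}, with coordinates written so that x_{0,1} ≥ x_{0,2} = ⋯ = x_{0,q}. Then the second partial derivatives of G_{β,h} at x_0 satisfy: ∂²G_{β,h}/∂u_1²(x_0) = β − β²(q−1) x_{0,1} x_{0,q}; ∂²G_{β,h}/∂u_1∂u_q(x_0) = β² x_{0,1} x_{0,q}; ∂²G_{β,h}/∂u_q²(x_0) = β − β²( x_{0,1} x_{0,q} + (q−2) x_{0,q}² ); and ∂²G_{β,h}/∂u_2∂u_q(x_0) = β² x_{0,q}². -/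

import Mathlib

/-!
Write `G = β/2 ‖u‖² - log Z` with `Z(u) = ∑ₖ exp (β uₖ + cₖ)`, `cₖ = h δₖ₁`, and let `p(u)`
be the Gibbs distribution `pₖ = exp (β uₖ + cₖ) / Z`. Then `∇G = β (u - p)` and
`∇²G = β I - β² (diag p - p pᵀ)`. At a minimum point the gradient vanishes, so `p(x₀) = x₀`,
and the four entries follow from `x₀,₁ + (q - 1) x₀,q = 1`.
-/

open Finset

noncomputable section

namespace CWP

def G (q : ℕ) [NeZero q] (β h : ℝ) (u : Fin q → ℝ) : ℝ :=
  β / 2 * (∑ i, u i ^ 2) -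
    Real.log (∑ k, Real.exp (β * u k + if k = 0 then h else 0))

def d2G (q : ℕ) [NeZero q] (β h : ℝ) (x : Fin q → ℝ) (i j : Fin q) : ℝ :=
  fderiv ℝ (fun u => fderiv ℝ (G q β h) u (Pi.single j 1)) x (Pi.single i 1)

open Real ContinuousLinearMap

section FreeEnergy

variable {ι : Type*} [Fintype ι] (β : ℝ) (c : ι → ℝ)

def partitionFn (u : ι → ℝ) : ℝ := ∑ k, exp (β * u k + c k)

def gibbs (u : ι → ℝ) (k : ι) : ℝ := exp (β * u k + c k) / partitionFn β c u

def freeEnergy (u : ι → ℝ) : ℝ := β / 2 * ∑ i, u i ^ 2 - log (partitionFn β c u)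

variable {β c}

local notation "𝐞" k:max => (proj k : (ι → ℝ) →L[ℝ] ℝ)

lemma partitionFn_pos [Nonempty ι] (u : ι → ℝ) : 0 < partitionFn β c u :=
  sum_pos (fun _ _ => exp_pos _) univ_nonempty

lemma hasFDerivAt_exp_affine (u : ι → ℝ) (k : ι) :
    HasFDerivAt (fun u : ι → ℝ => exp (β * u k + c k))
      ((β * exp (β * u k + c k)) • 𝐞 k) u := by
  have := (((hasFDerivAt_apply k u).const_mul β).add_const (c k)).exp
  simpa [smul_smul, mul_comm] using this

lemma hasFDerivAt_log_partitionFn [Nonempty ι] (u : ι → ℝ) :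
    HasFDerivAt (fun u => log (partitionFn β c u)) (β • ∑ k, gibbs β c u k • 𝐞 k) u := by
  have := (HasFDerivAt.fun_sum fun k _ => hasFDerivAt_exp_affine (β := β) (c := c) u k).log
    (partitionFn_pos u).ne'
  refine this.congr_fderiv ?_
  ext v
  simp only [gibbs, partitionFn, smul_apply, _root_.sum_apply, proj_apply, smul_eq_mul,
    mul_sum]
  exact sum_congr rfl fun k _ => by ring

lemma gibbs_eq_exp [Nonempty ι] (u : ι → ℝ) (k : ι) :
    gibbs β c u k = exp (β * u k + c k - log (partitionFn β c u)) := by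
  rw [exp_sub, exp_log (partitionFn_pos u), gibbs]

lemma hasFDerivAt_gibbs [Nonempty ι] (u : ι → ℝ) (j : ι) :
    HasFDerivAt (fun u => gibbs β c u j)
      ((β * gibbs β c u j) • (𝐞 j - ∑ k, gibbs β c u k • 𝐞 k)) u := by
  have := ((((hasFDerivAt_apply j u).const_mul β).add_const (c j)).fun_sub
    (hasFDerivAt_log_partitionFn (β := β) (c := c) u)).exp
  rw [funext fun u => gibbs_eq_exp u j]
  refine this.congr_fderiv ?_
  rw [← gibbs_eq_exp, ← smul_sub, smul_smul, mul_comm]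

lemma hasFDerivAt_sum_sq (u : ι → ℝ) :
    HasFDerivAt (fun u : ι → ℝ => ∑ i, u i ^ 2) (∑ i, (2 * u i) • 𝐞 i) u :=
  HasFDerivAt.fun_sum fun i _ => by simpa using (hasFDerivAt_apply (𝕜 := ℝ) i u).pow 2

lemma hasFDerivAt_freeEnergy [Nonempty ι] (u : ι → ℝ) :
    HasFDerivAt (freeEnergy β c) (β • ∑ i, (u i - gibbs β c u i) • 𝐞 i) u := by
  refine (((hasFDerivAt_sum_sq u).const_mul (β / 2)).sub
    (hasFDerivAt_log_partitionFn (β := β) (c := c) u)).congr_fderiv ?_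
  ext v
  simp only [smul_apply, sub_apply, _root_.sum_apply, proj_apply, smul_eq_mul, mul_sum,
    ← sum_sub_distrib]
  exact sum_congr rfl fun k _ => by ring

lemma fderiv_freeEnergy_single [Nonempty ι] [DecidableEq ι] (u : ι → ℝ) (j : ι) :
    fderiv ℝ (freeEnergy β c) u (Pi.single j 1) = β * (u j - gibbs β c u j) := by
  rw [(hasFDerivAt_freeEnergy u).fderiv]
  simp [Pi.single_apply]

lemma fderiv_fderiv_freeEnergy_single [Nonempty ι] [DecidableEq ι] (x : ι → ℝ) (i j : ι) :
    fderiv ℝ (fun u => fderiv ℝ (freeEnergy β c) u (Pi.single j 1)) x (Pi.single i 1) =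
      β * (if i = j then 1 else 0) -
        β ^ 2 * gibbs β c x j * ((if i = j then 1 else 0) - gibbs β c x i) := by
  simp only [fderiv_freeEnergy_single]
  rw [(((hasFDerivAt_apply j x).fun_sub (hasFDerivAt_gibbs x j)).const_mul β).fderiv]
  simp only [smul_apply, sub_apply, proj_apply, smul_eq_mul, _root_.sum_apply, Pi.single_apply,
    eq_comm (a := j), mul_ite, mul_one, mul_zero, sum_ite_eq', mem_univ, if_true]
  split_ifs <;> ring

lemma gibbs_eq_self_of_isLocalMin [Nonempty ι] (hβ : β ≠ 0) {x : ι → ℝ}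
    (hx : IsLocalMin (freeEnergy β c) x) : gibbs β c x = x := by
  classical
  funext j
  have hcrit := fderiv_freeEnergy_single (β := β) (c := c) x j
  rw [hx.fderiv_eq_zero, zero_apply, eq_comm, mul_eq_zero, sub_eq_zero] at hcrit
  exact (hcrit.resolve_left hβ).symm

lemma fderiv_fderiv_freeEnergy_single_of_isLocalMin [Nonempty ι] [DecidableEq ι] (hβ : β ≠ 0)
    {x : ι → ℝ} (hx : IsLocalMin (freeEnergy β c) x) (i j : ι) :
    fderiv ℝ (fun u => fderiv ℝ (freeEnergy β c) u (Pi.single j 1)) x (Pi.single i 1) =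
      β * (if i = j then 1 else 0) - β ^ 2 * x j * ((if i = j then 1 else 0) - x i) := by
  rw [fderiv_fderiv_freeEnergy_single, gibbs_eq_self_of_isLocalMin hβ hx]

end FreeEnergy

lemma sum_univ_eq_add_card_sub_one_mul {ι R : Type*} [Fintype ι] [DecidableEq ι] [Ring R]
    {x : ι → R} {a b : ι} (hx : ∀ i, i ≠ a → x i = x b) :
    ∑ i, x i = x a + ((Fintype.card ι : R) - 1) * x b := by
  rw [← add_sum_erase _ _ (mem_univ a), sum_congr rfl fun i hi => hx i (ne_of_mem_erase hi),
    sum_const, card_erase_of_mem (mem_univ a), card_univ, nsmul_eq_mul,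
    Nat.cast_sub (Fintype.card_pos_iff.mpr ⟨a⟩), Nat.cast_one]

lemma G_eq_freeEnergy (q : ℕ) [NeZero q] (β h : ℝ) :
    G q β h = freeEnergy β (fun k => if k = 0 then h else 0) := rfl

/-- The Hessian entries of G_{β,h} at a global minimum point x₀ written with
x_{0,1} ≥ x_{0,2} = ⋯ = x_{0,q}. -/
theorem stmt_18 (q : ℕ) [NeZero q] (hq : 3 ≤ q) (β h : ℝ) (hβ : 0 < β)
    (x : Fin q → ℝ) (hx : ∀ y, G q β h x ≤ G q β h y)
    (heq : ∀ i j : Fin q, i ≠ 0 → j ≠ 0 → x i = x j)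
    (hsum : ∑ i, x i = 1) :
    d2G q β h x 0 0 = β - β ^ 2 * ((q : ℝ) - 1) * x 0 * x ⟨q - 1, by omega⟩ ∧
    d2G q β h x 0 ⟨q - 1, by omega⟩ = β ^ 2 * x 0 * x ⟨q - 1, by omega⟩ ∧
    d2G q β h x ⟨q - 1, by omega⟩ ⟨q - 1, by omega⟩ =
      β - β ^ 2 * (x 0 * x ⟨q - 1, by omega⟩ + ((q : ℝ) - 2) * (x ⟨q - 1, by omega⟩) ^ 2) ∧
    d2G q β h x ⟨1, by omega⟩ ⟨q - 1, by omega⟩ = β ^ 2 * (x ⟨q - 1, by omega⟩) ^ 2 := by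
  set l : Fin q := ⟨q - 1, by omega⟩
  have hl0 : l ≠ 0 := Fin.ne_of_val_ne (by simp [l]; omega)
  have h10 : (⟨1, by omega⟩ : Fin q) ≠ 0 := Fin.ne_of_val_ne (by simp)
  have h1l : (⟨1, by omega⟩ : Fin q) ≠ l := Fin.ne_of_val_ne (by simp [l]; omega)
  have hsum' : x 0 + ((q : ℝ) - 1) * x l = 1 := by
    simpa only [sum_univ_eq_add_card_sub_one_mul fun i hi => heq i l hi hl0,
      Fintype.card_fin] using hsum
  have hmin : IsLocalMin (freeEnergy β fun k : Fin q => if k = 0 then h else 0) x := by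
    rw [← G_eq_freeEnergy]
    exact .of_forall hx
  have hess (i j : Fin q) : d2G q β h x i j =
      β * (if i = j then 1 else 0) - β ^ 2 * x j * ((if i = j then 1 else 0) - x i) := by
    rw [d2G, G_eq_freeEnergy]
    exact fderiv_fderiv_freeEnergy_single_of_isLocalMin hβ.ne' hmin i j
  refine ⟨?_, ?_, ?_, ?_⟩
  · rw [hess, if_pos rfl]
    linear_combination (β ^ 2 * x 0) * hsum'
  · rw [hess, if_neg hl0.symm]
    ring
  · rw [hess, if_pos rfl]
    linear_combination (β ^ 2 * x l) * hsum'
  · rw [hess, if_neg h1l, heq _ _ h10 hl0]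
    ring

end CWP
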